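/- arXiv:2206.07560 — 2 statements merged into one kernel-verified Lean document; each statement's English description precedes it below -/
import Mathlib

section
/- Suppose φ_n(x) = G(x) λ_n(x) with G positive and smooth, each λ_n a polynomial of degree exactly n, and the differentiation relation φ_n' = −b_{n−1}φ_{n−1} + i c_n φ_n + b_n φ_{n+1} holds with b_n ≠ 0. Then G'/G is a polynomial of degree at most 1, hence G(x) = G(0) exp(−γx² + δx) for some constants γ, δ. -/
open Real

theorem gaussian_form_of_G
    (G : ℝ → ℝ) (hGpos : ∀ x, 0 < G x) (hGsmooth : ContDiff ℝ (⊤ : ℕ∞) G)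
    (lam : ℕ → Polynomial ℂ) (hdeg : ∀ n, (lam n).degree = n)
    (b : ℕ → ℂ) (hb : ∀ n, b n ≠ 0) (c : ℕ → ℝ)
    (B : ℕ → ℂ) (hB0 : B 0 = 0) (hBs : ∀ n, B (n+1) = b n)
    (φ : ℕ → ℝ → ℂ) (hφ : ∀ n (x : ℝ), φ n x = (G x : ℂ) * (lam n).eval (x:ℂ))
    (hrec : ∀ n (x : ℝ), deriv (φ n) x =
      -(starRingEnd ℂ) (B n) * φ (n-1) x + Complex.I * c n * φ n x + b n * φ (n+1) x) :
    (∃ p : Polynomial ℝ, p.degree ≤ 1 ∧ ∀ x, deriv G x / G x = p.eval x) ∧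
    ∃ γ δ : ℝ, ∀ x, G x = G 0 * Real.exp (-γ*x^2 + δ*x) := by
  have hGdiff : Differentiable ℝ G := hGsmooth.differentiable (by simp)
  have hGne : ∀ x, G x ≠ 0 := fun x => (hGpos x).ne'
  have h0 : (lam 0).degree = 0 := by simpa using hdeg 0
  set c0 := (lam 0).coeff 0 with hc0def
  have hlam0 : lam 0 = Polynomial.C c0 := Polynomial.eq_C_of_degree_le_zero h0.le
  have hc0ne : c0 ≠ 0 := by
    intro h
    rw [h, map_zero] at hlam0
    rw [hlam0] at h0
    simp at h0
  have h1 : (lam 1).degree ≤ 1 := by rw [hdeg 1]; norm_num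
  have hlam1 : lam 1 = Polynomial.C ((lam 1).coeff 1) * Polynomial.X
      + Polynomial.C ((lam 1).coeff 0) :=
    Polynomial.eq_X_add_C_of_degree_le_one h1
  set k0 := (lam 1).coeff 0
  set k1 := (lam 1).coeff 1
  -- key identity from the recurrence at n = 0
  have key : ∀ x : ℝ, (Complex.ofReal (deriv G x)) * c0 =
      Complex.I * c 0 * ((G x : ℂ) * c0) + b 0 * ((G x : ℂ) * (lam 1).eval (x : ℂ)) := by
    intro x
    have hφ0 : φ 0 = fun y : ℝ => (G y : ℂ) * c0 := by
      funext y; rw [hφ, hlam0]; simp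
    have hd : deriv (φ 0) x = Complex.ofReal (deriv G x) * c0 := by
      rw [hφ0]
      exact (((hGdiff x).hasDerivAt.ofReal_comp).mul_const c0).deriv
    have h := hrec 0 x
    rw [hd, hB0] at h
    simpa [hφ, hlam0] using h
  set α : ℂ := Complex.I * c 0 + (b 0 / c0) * k0 with hαdef
  set β : ℂ := (b 0 / c0) * k1 with hβdef
  have hr : ∀ x : ℝ, Complex.ofReal (deriv G x) = (α + β * x) * (G x : ℂ) := by
    intro x
    have hk := key x
    rw [hlam1] at hk
    simp only [Polynomial.eval_add, Polynomial.eval_mul, Polynomial.eval_C,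
      Polynomial.eval_X] at hk
    rw [hαdef, hβdef]
    field_simp
    linear_combination hk
  have hr2 : ∀ x : ℝ, ((deriv G x / G x : ℝ) : ℂ) = α + β * x := by
    intro x
    push_cast
    rw [div_eq_iff (by exact_mod_cast hGne x)]
    exact hr x
  have hα : α.im = 0 := by
    have := congrArg Complex.im (hr2 0)
    simpa using this.symm
  have hβ : β.im = 0 := by
    have := congrArg Complex.im (hr2 1)
    simp [Complex.add_im, Complex.mul_im, hα] at this
    simpa using this.symm
  set a := α.re
  set bb := β.re
  have hreal : ∀ x : ℝ, deriv G x / G x = a + bb * x := by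
    intro x
    have h := hr2 x
    have hαe : α = (a : ℂ) := Complex.ext rfl hα
    have hβe : β = (bb : ℂ) := Complex.ext rfl hβ
    rw [hαe, hβe] at h
    have : ((deriv G x / G x : ℝ) : ℂ) = ((a + bb * x : ℝ) : ℂ) := by
      rw [h]; push_cast; ring
    exact_mod_cast this
  have hR : ∀ x : ℝ, deriv G x = (a + bb * x) * G x := by
    intro x
    have h := hreal x
    rw [div_eq_iff (hGne x)] at h
    exact h
  constructor
  · refine ⟨Polynomial.C bb * Polynomial.X + Polynomial.C a, Polynomial.degree_linear_le, ?_⟩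
    intro x
    rw [hreal x]
    simp
    ring
  · refine ⟨-bb / 2, a, ?_⟩
    have hF : ∀ x, HasDerivAt (fun y => G y * Real.exp (-(a * y + bb / 2 * y ^ 2))) 0 x := by
      intro x
      have h1 : HasDerivAt (fun y : ℝ => a * y + bb / 2 * y ^ 2) (a + bb * x) x := by
        have := ((hasDerivAt_id x).const_mul a).fun_add
          ((hasDerivAt_pow 2 x).const_mul (bb / 2))
        refine this.congr_deriv ?_
        push_cast
        ring
      have he := h1.fun_neg.exp
      have := (hGdiff x).hasDerivAt.fun_mul he
      refine this.congr_deriv ?_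
      rw [hR x]
      ring
    have hdiffF : Differentiable ℝ (fun y => G y * Real.exp (-(a * y + bb / 2 * y ^ 2))) :=
      fun x => (hF x).differentiableAt
    have hdF : ∀ x, deriv (fun y => G y * Real.exp (-(a * y + bb / 2 * y ^ 2))) x = 0 :=
      fun x => (hF x).deriv
    intro x
    have hconst := is_const_of_deriv_eq_zero hdiffF hdF x 0
    beta_reduce at hconst
    have h0' : G 0 * Real.exp (-(a * 0 + bb / 2 * 0 ^ 2)) = G 0 := by norm_num
    rw [h0'] at hconst
    have : G x = G 0 * Real.exp (a * x + bb / 2 * x ^ 2) := by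
      have h2 := congrArg (fun t => t * Real.exp (a * x + bb / 2 * x ^ 2)) hconst
      beta_reduce at h2
      rw [mul_assoc, ← Real.exp_add] at h2
      have he0 : (-(a * x + bb / 2 * x ^ 2) + (a * x + bb / 2 * x ^ 2)) = 0 := by ring
      rw [he0, Real.exp_zero, mul_one] at h2
      exact h2
    rw [this]
    congr 1
    congr 1
    ring
end

section
/- Suppose {φ_n} satisfy the tridiagonal differentiation relation φ_n' = −b̄_{n−1}φ_{n−1} + ic_nφ_n + b_nφ_{n+1} with b_{−1}=0, and suppose each φ_n is a polynomial multiple of a fixed positive function G: φ_n = G λ_n. Then the polynomials λ_n satisfy λ_n' = −b̄_{n−1}λ_{n−1} + (ic_n − G'/G)λ_n + b_nλ_{n+1}, and if b_n ≠ 0 for all n and deg λ_0 = 0, λ_0 ≠ 0, and G'/G is a nonconstant linear polynomial, then deg λ_n = n for all n. -/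
open Real

theorem lambda_recurrence_and_degrees
    (G : ℝ → ℝ) (hGpos : ∀ x, 0 < G x) (hGsmooth : ContDiff ℝ (⊤ : ℕ∞) G)
    (lam : ℕ → Polynomial ℂ)
    (b : ℕ → ℂ) (c : ℕ → ℝ)
    (B : ℕ → ℂ) (hB0 : B 0 = 0) (hBs : ∀ n, B (n+1) = b n)
    (φ : ℕ → ℝ → ℂ) (hφ : ∀ n (x : ℝ), φ n x = (G x : ℂ) * (lam n).eval (x:ℂ))
    (hrec : ∀ n (x : ℝ), deriv (φ n) x =
      -(starRingEnd ℂ) (B n) * φ (n-1) x + Complex.I * c n * φ n x + b n * φ (n+1) x) :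
    (∀ n (x : ℝ), (Polynomial.derivative (lam n)).eval (x:ℂ) =
        -(starRingEnd ℂ) (B n) * (lam (n-1)).eval (x:ℂ) +
          (Complex.I * c n - (deriv G x / G x : ℝ)) * (lam n).eval (x:ℂ) +
          b n * (lam (n+1)).eval (x:ℂ)) ∧
    ((∀ n, b n ≠ 0) → (lam 0).degree = 0 → lam 0 ≠ 0 →
      (∃ p : Polynomial ℝ, p.degree = 1 ∧ ∀ x, deriv G x / G x = p.eval x) →
      ∀ n, (lam n).degree = n) := by
  have hGd : Differentiable ℝ G := hGsmooth.differentiable (by simp)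
  have hGne : ∀ x : ℝ, ((G x : ℝ) : ℂ) ≠ 0 := fun x => by
    exact_mod_cast Complex.ofReal_ne_zero.mpr (ne_of_gt (hGpos x))
  have hderiv : ∀ n (x : ℝ), deriv (φ n) x
      = ((deriv G x : ℝ) : ℂ) * (lam n).eval (x:ℂ)
        + (G x : ℂ) * (Polynomial.derivative (lam n)).eval (x:ℂ) := by
    intro n x
    have h1 : HasDerivAt (fun y : ℝ => ((G y : ℝ) : ℂ)) ((deriv G x : ℝ) : ℂ) x :=
      ((hGd x).hasDerivAt).ofReal_comp
    have h2 : HasDerivAt (fun y : ℝ => (lam n).eval (y:ℂ))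
        ((Polynomial.derivative (lam n)).eval (x:ℂ)) x :=
      ((lam n).hasDerivAt (x:ℂ)).comp_ofReal
    have hfun : φ n = fun y : ℝ => ((G y : ℝ) : ℂ) * (lam n).eval (y:ℂ) := funext (hφ n)
    rw [hfun]
    exact (h1.mul h2).deriv
  -- Part 1
  have part1 : ∀ n (x : ℝ), (Polynomial.derivative (lam n)).eval (x:ℂ) =
      -(starRingEnd ℂ) (B n) * (lam (n-1)).eval (x:ℂ) +
        (Complex.I * c n - (deriv G x / G x : ℝ)) * (lam n).eval (x:ℂ) +
        b n * (lam (n+1)).eval (x:ℂ) := by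
    intro n x
    have key := hrec n x
    rw [hderiv, hφ, hφ, hφ] at key
    have hG := hGne x
    rw [Complex.ofReal_div]
    field_simp
    linear_combination key
  refine ⟨part1, ?_⟩
  rintro hb hdeg0 hne0 ⟨p, hp1, hp2⟩ n
  classical
  set Q : Polynomial ℂ := p.map (algebraMap ℝ ℂ) with hQ
  have hQdeg : Q.degree = 1 := by
    rw [hQ, Polynomial.degree_map_eq_of_injective (algebraMap ℝ ℂ).injective, hp1]
  have hQeval : ∀ x : ℝ, Q.eval (x:ℂ) = ((deriv G x / G x : ℝ) : ℂ) := by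
    intro x
    rw [hp2 x, hQ, Polynomial.eval_map, ← Complex.coe_algebraMap, Polynomial.eval₂_at_apply]
  -- polynomial identity
  have hpoly : ∀ m, Polynomial.C (b m) * lam (m+1) =
      Polynomial.derivative (lam m) + Polynomial.C ((starRingEnd ℂ) (B m)) * lam (m-1)
        - Polynomial.C (Complex.I * c m) * lam m + Q * lam m := by
    intro m
    apply Polynomial.eq_of_infinite_eval_eq
    apply Set.Infinite.mono (s := Set.range (Complex.ofReal))
    · rintro _ ⟨x, rfl⟩
      have h := part1 m x
      simp only [Set.mem_setOf_eq, Polynomial.eval_add, Polynomial.eval_sub,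
        Polynomial.eval_mul, Polynomial.eval_C, hQeval x]
      linear_combination -h
    · exact Set.infinite_range_of_injective Complex.ofReal_injective
  have hCle : ∀ (a : ℂ) (q : Polynomial ℂ), (Polynomial.C a * q).degree ≤ q.degree := by
    intro a q
    calc (Polynomial.C a * q).degree ≤ (Polynomial.C a).degree + q.degree :=
          Polynomial.degree_mul_le _ _
      _ ≤ 0 + q.degree := add_le_add Polynomial.degree_C_le le_rfl
      _ = q.degree := zero_add _
  -- step lemma
  have hstep : ∀ m : ℕ, (lam m).degree = m →
      (Polynomial.C ((starRingEnd ℂ) (B m)) * lam (m-1)).degree < ((m+1 : ℕ) : WithBot ℕ) →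
      (lam (m+1)).degree = (m+1 : ℕ) := by
    intro m hm hlt
    have hlamne : lam m ≠ 0 := by
      intro h
      rw [h, Polynomial.degree_zero] at hm
      exact absurd hm (by simp)
    have hQm : (Q * lam m).degree = ((m+1 : ℕ) : WithBot ℕ) := by
      rw [Polynomial.degree_mul, hQdeg, hm]
      norm_cast
      ring
    have h1 : (Polynomial.derivative (lam m)).degree < ((m+1 : ℕ) : WithBot ℕ) := by
      calc (Polynomial.derivative (lam m)).degree < (lam m).degree :=
            Polynomial.degree_derivative_lt hlamne
        _ = (m : WithBot ℕ) := hm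
        _ < ((m+1 : ℕ) : WithBot ℕ) := by exact_mod_cast Nat.lt_succ_self m
    have h2 : (Polynomial.C (Complex.I * c m) * lam m).degree < ((m+1 : ℕ) : WithBot ℕ) := by
      calc (Polynomial.C (Complex.I * c m) * lam m).degree ≤ (lam m).degree :=
            hCle _ _
        _ = (m : WithBot ℕ) := hm
        _ < ((m+1 : ℕ) : WithBot ℕ) := by exact_mod_cast Nat.lt_succ_self m
    have hS : (Polynomial.derivative (lam m) + Polynomial.C ((starRingEnd ℂ) (B m)) * lam (m-1)
        - Polynomial.C (Complex.I * c m) * lam m).degree < ((m+1 : ℕ) : WithBot ℕ) := by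
      apply lt_of_le_of_lt (Polynomial.degree_sub_le _ _)
      rw [max_lt_iff]
      refine ⟨lt_of_le_of_lt (Polynomial.degree_add_le _ _) ?_, h2⟩
      rw [max_lt_iff]
      exact ⟨h1, hlt⟩
    have hR : (Polynomial.derivative (lam m) + Polynomial.C ((starRingEnd ℂ) (B m)) * lam (m-1)
        - Polynomial.C (Complex.I * c m) * lam m + Q * lam m).degree = ((m+1 : ℕ) : WithBot ℕ) := by
      rw [Polynomial.degree_add_eq_right_of_degree_lt (by rw [hQm]; exact hS), hQm]
    have := hpoly m
    rw [← this, Polynomial.degree_C_mul (hb m)] at hR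
    exact hR
  -- induction
  have main : ∀ m : ℕ, (lam m).degree = m ∧ (lam (m+1)).degree = (m+1 : ℕ) := by
    intro m
    induction m with
    | zero =>
      refine ⟨hdeg0, ?_⟩
      apply hstep 0 hdeg0
      rw [hB0]
      simp only [map_zero, Polynomial.C_0, zero_mul, Polynomial.degree_zero]
      exact_mod_cast WithBot.bot_lt_coe 1
    | succ k ih =>
      refine ⟨ih.2, ?_⟩
      apply hstep (k+1) ih.2
      have : (Polynomial.C ((starRingEnd ℂ) (B (k+1))) * lam k).degree ≤ (k : WithBot ℕ) := by
        apply le_trans (hCle _ _)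
        exact le_of_eq ih.1
      apply lt_of_le_of_lt this
      exact_mod_cast Nat.lt_succ_of_lt (Nat.lt_succ_self k)
  exact (main n).1
end
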